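/- arXiv:1511.02533 — 2 statements merged into one kernel-verified Lean document; each statement's English description precedes it below -/
import Mathlib

section
/- For integers s ≥ 1, z ≥ 1, t ≥ 2 and 1 ≤ r < t, with ξ_r^{s,t,z} := (r+z-1)!·(t-r+s)!/((r-1)!·(t-r)!·(s+t+z)!), the identity ξ_r^{s,t,z} - ξ_{r+1}^{s,t,z} + z·ξ_{r+1}^{s,t+1,z-1} - s·ξ_{r+1}^{s-1,t+1,z} = 0 holds in ℚ. -/
/-- ξ_r^{s,t,z} = (r+z-1)!·(t-r+s)!/((r-1)!·(t-r)!·(s+t+z)!) -/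
def xi (s t z r : ℕ) : ℚ :=
  (((r + z - 1).factorial : ℚ) * ((t - r + s).factorial : ℚ)) /
    (((r - 1).factorial : ℚ) * ((t - r).factorial : ℚ) * ((s + t + z).factorial : ℚ))

/-- lrEQ 5: ξ_r^{s,t,z} - ξ_{r+1}^{s,t,z} + z·ξ_{r+1}^{s,t+1,z-1} - s·ξ_{r+1}^{s-1,t+1,z} = 0 for 1 ≤ r < t. -/
theorem stmt_17 (s z t r : ℕ) (hs : 1 ≤ s) (hz : 1 ≤ z) (ht : 2 ≤ t)
    (hr1 : 1 ≤ r) (hrt : r < t) :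
    xi s t z r - xi s t z (r + 1) + (z : ℚ) * xi s (t + 1) (z - 1) (r + 1)
      - (s : ℚ) * xi (s - 1) (t + 1) z (r + 1) = 0 := by
  obtain ⟨a, rfl⟩ := Nat.exists_eq_add_of_le hr1
  obtain ⟨b, rfl⟩ := Nat.exists_eq_add_of_le hs
  obtain ⟨c, rfl⟩ := Nat.exists_eq_add_of_le hz
  obtain ⟨k, rfl⟩ := Nat.exists_eq_add_of_le hrt
  simp only [xi, Nat.succ_eq_add_one]
  simp only [show 1+a+(1+c)-1 = a+c+1 from by omega,
    show 1+a-1 = a from by omega,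
    show 1+a+1+k-(1+a) = k+1 from by omega,
    show 1+b+(1+a+1+k)+(1+c) = a+b+c+k+4 from by omega,
    show 1+a+1+(1+c)-1 = a+c+1+1 from by omega,
    show 1+a+1-1 = a+1 from by omega,
    show 1+a+1+k-(1+a+1) = k from by omega,
    show 1+a+1+(1+c-1)-1 = a+c+1 from by omega,
    show 1+a+1+k+1-(1+a+1) = k+1 from by omega,
    show 1+b+(1+a+1+k+1)+(1+c-1) = a+b+c+k+4 from by omega,
    show 1+b-1+(1+a+1+k+1)+(1+c) = a+b+c+k+4 from by omega]
  simp only [show k+1+(1+b) = b+k+1+1 from by omega,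
    show k+(1+b) = b+k+1 from by omega,
    show k+1+(1+b-1) = b+k+1 from by omega]
  have hF : (0:ℚ) < ((a+b+c+k+4).factorial : ℚ) := by positivity
  have hA : (0:ℚ) < ((a.factorial : ℚ)) := by positivity
  have hK : (0:ℚ) < ((k.factorial : ℚ)) := by positivity
  generalize ((a+b+c+k+4).factorial : ℚ) = F at *
  simp only [Nat.factorial_succ]
  push_cast
  generalize ((a.factorial : ℚ)) = A at *
  generalize ((k.factorial : ℚ)) = K at *
  generalize (((a+c).factorial : ℚ)) = P
  generalize (((b+k).factorial : ℚ)) = Q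
  have hF' := hF.ne'
  have hA' := hA.ne'
  have hK' := hK.ne'
  field_simp
  ring
end

section
/- Let G be a finite group acting k-linearly on a vector space V over a field of characteristic 0, and let g, h ∈ G. If the fixed subspaces satisfy ((1-g)V) ∩ ((1-h)V) = 0, then codim V^{gh} = codim V^g + codim V^h, i.e., dim((1-gh)V) = dim((1-g)V) + dim((1-h)V). -/
/-!
Since `1 - gh = (1 - g) h + (1 - h)`, the range `(1 - gh)V` lies in `(1 - g)V + (1 - h)V`, a
direct sum by hypothesis, and the same identity shows that `V^{gh} = V^g ∩ V^h` once the two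
ranges meet trivially. For the reverse inequality, average over the finite subgroup `H`
generated by `g` and `h` (possible in characteristic zero): this projection onto `V^H` kills
`(1 - g)V + (1 - h)V`, while `V^g ∩ V^h = V^H`. Hence
`dim ((1 - g)V ⊕ (1 - h)V) ≤ codim (V^g ∩ V^h) = dim (1 - gh)V`.
-/

open Module LinearMap

namespace Module.End

variable {R M : Type*} [Ring R] [AddCommGroup M] [Module R M]

theorem one_sub_mul_apply (f g : End R M) (x : M) :
    (1 - f * g) x = (1 - f) (g x) + (1 - g) x := by
  simp only [LinearMap.sub_apply, one_apply, mul_apply]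
  abel

theorem one_sub_apply_eq_zero_iff {f : End R M} {x : M} : (1 - f) x = 0 ↔ f x = x := by
  rw [LinearMap.sub_apply, one_apply, sub_eq_zero, eq_comm]

theorem range_one_sub_mul_le (f g : End R M) :
    range (1 - f * g) ≤ range (1 - f) ⊔ range (1 - g) := by
  rintro _ ⟨x, rfl⟩
  rw [one_sub_mul_apply]
  exact Submodule.add_mem_sup ⟨g x, rfl⟩ ⟨x, rfl⟩

theorem ker_one_sub_mul_of_disjoint {f g : End R M}
    (hfg : Disjoint (range (1 - f)) (range (1 - g))) :
    ker (1 - f * g) = ker (1 - f) ⊓ ker (1 - g) := by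
  ext x
  simp only [mem_ker, Submodule.mem_inf, one_sub_mul_apply]
  constructor
  · intro hx
    have hgx : (1 - g) x = 0 := by
      refine Submodule.disjoint_def.mp hfg.symm _ ⟨x, rfl⟩ ⟨-g x, ?_⟩
      rw [map_neg, eq_comm, ← add_eq_zero_iff_eq_neg', hx]
    rw [hgx, add_zero, one_sub_apply_eq_zero_iff.mp hgx] at hx
    exact ⟨hx, hgx⟩
  · rintro ⟨hfx, hgx⟩
    rw [one_sub_apply_eq_zero_iff.mp hgx, hfx, hgx, add_zero]

end Module.End

namespace Representation

section CommRing

variable {k G V : Type*} [CommRing k] [Group G] [AddCommGroup V] [Module k V]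
  (ρ : Representation k G V)

theorem apply_eq_of_mem_closure {S : Set G} {x : V} (hx : ∀ s ∈ S, ρ s x = x) {t : G}
    (ht : t ∈ Subgroup.closure S) : ρ t x = x := by
  induction ht using Subgroup.closure_induction with
  | mem s hs => exact hx s hs
  | one => simp
  | mul a b _ _ ha hb => rw [map_mul, Module.End.mul_apply, hb, ha]
  | inv a _ ha => rw [← ha, ← Module.End.mul_apply, ← map_mul, inv_mul_cancel, ha, map_one,
      Module.End.one_apply]

variable [Fintype G] [Invertible (Fintype.card G : k)]

theorem averageMap_apply_apply (g : G) (x : V) : ρ.averageMap (ρ g x) = ρ.averageMap x := by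
  rw [averageMap, ← asAlgebraHom_single_one, ← Module.End.mul_apply, ← map_mul,
    GroupAlgebra.mul_average_right]

theorem range_one_sub_le_ker_averageMap (g : G) : range (1 - ρ g) ≤ ker ρ.averageMap := by
  rintro _ ⟨x, rfl⟩
  rw [mem_ker, LinearMap.sub_apply, Module.End.one_apply, map_sub, averageMap_apply_apply,
    sub_self]

theorem disjoint_range_one_sub_sup_invariants (g h : G) :
    Disjoint (range (1 - ρ g) ⊔ range (1 - ρ h)) ρ.invariants :=
  ρ.isProj_averageMap.isCompl.disjoint.symm.mono_left <|
    sup_le (ρ.range_one_sub_le_ker_averageMap g) (ρ.range_one_sub_le_ker_averageMap h)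

end CommRing

variable {k G V : Type*} [Field k] [CharZero k] [Group G] [Finite G] [AddCommGroup V]
  [Module k V] [FiniteDimensional k V]

theorem finrank_sup_range_one_sub_add_finrank_inf_ker_one_sub_le
    (ρ : Representation k G V) (g h : G) :
    finrank k ↥(range (1 - ρ g) ⊔ range (1 - ρ h)) +
        finrank k ↥(ker (1 - ρ g) ⊓ ker (1 - ρ h)) ≤ finrank k V := by
  let H := Subgroup.closure {g, h}
  have : Fintype H := Fintype.ofFinite H
  have : Invertible (Fintype.card H : k) :=
    invertibleOfNonzero (Nat.cast_ne_zero.mpr Fintype.card_ne_zero)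
  refine Submodule.finrank_add_finrank_le_of_disjoint <|
    (disjoint_range_one_sub_sup_invariants (ρ.comp H.subtype)
      ⟨g, Subgroup.subset_closure (by simp)⟩ ⟨h, Subgroup.subset_closure (by simp)⟩).mono_right ?_
  rintro x ⟨hgx, hhx⟩ ⟨t, ht⟩
  refine ρ.apply_eq_of_mem_closure ?_ ht
  rintro s (rfl | rfl)
  exacts [Module.End.one_sub_apply_eq_zero_iff.mp hgx, Module.End.one_sub_apply_eq_zero_iff.mp hhx]

end Representation

/-- If (1-g)V ∩ (1-h)V = 0 then
dim (1-gh)V = dim (1-g)V + dim (1-h)V, i.e. codim V^{gh} = codim V^g + codim V^h. -/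
theorem stmt_19 {k : Type*} [Field k] [CharZero k] {G : Type*} [Group G] [Finite G]
    {V : Type*} [AddCommGroup V] [Module k V] [FiniteDimensional k V]
    (ρ : Representation k G V) (g h : G)
    (hdisj : LinearMap.range (1 - ρ g) ⊓ LinearMap.range (1 - ρ h) = ⊥) :
    Module.finrank k (LinearMap.range (1 - ρ (g * h)))
      = Module.finrank k (LinearMap.range (1 - ρ g))
        + Module.finrank k (LinearMap.range (1 - ρ h)) := by
  have hsup := Submodule.finrank_sup_add_finrank_inf_eq (range (1 - ρ g)) (range (1 - ρ h))
  rw [hdisj, finrank_bot, add_zero] at hsup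
  have hle := Submodule.finrank_mono (Module.End.range_one_sub_mul_le (ρ g) (ρ h))
  have hrank := finrank_range_add_finrank_ker (1 - ρ g * ρ h)
  rw [Module.End.ker_one_sub_mul_of_disjoint (disjoint_iff.mpr hdisj)] at hrank
  have hbound := ρ.finrank_sup_range_one_sub_add_finrank_inf_ker_one_sub_le g h
  rw [map_mul]
  omega
end
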